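/- Let A ∈ M₃⊗M₃ be separable. Then V₁[A] = V₁ ∩ T[A] if and only if P[A] = Q[A]. -/

import Mathlib

open Matrix BigOperators
open scoped ComplexOrder

/-- Index set for `M₃ ⊗ M₃ ≅ M₉`: pairs `(i,k)` with `i,k ∈ Fin 3`. -/
abbrev Idx : Type := Fin 3 × Fin 3

/-- `M₃ ⊗ M₃`, identified with 9×9 complex matrices. -/
abbrev M9 : Type := Matrix Idx Idx ℂ

/-- Vectors in `ℂ³ ⊗ ℂ³ ≅ ℂ⁹`. -/
abbrev V9 : Type := Idx → ℂ

/-- The product vector `x ⊗ y`, with entries `(x⊗y)(i,k) = x i * y k`. -/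
def prodVec (x y : Fin 3 → ℂ) : V9 := fun p => x p.1 * y p.2

/-- Entrywise complex conjugate of a vector in `ℂ³`. -/
def conjVec (x : Fin 3 → ℂ) : Fin 3 → ℂ := fun i => (starRingEnd ℂ) (x i)

/-- The rank-one matrix `z z*`. -/
def rankOne (z : V9) : M9 := Matrix.vecMulVec z (fun p => (starRingEnd ℂ) (z p))

/-- The partial transpose: `A^Γ((i,k),(j,l)) = A((j,k),(i,l))`. -/
def ptrans (A : M9) : M9 := fun p q => A (q.1, p.2) (p.1, q.2)

/-- The range of a matrix `A`, as a subspace of `ℂ⁹`. -/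
noncomputable def MatRange (A : M9) : Submodule ℂ V9 := LinearMap.range A.mulVecLin

/-- `A` is separable: a finite sum of `(x⊗y)(x⊗y)*` over product vectors. -/
def IsSep (A : M9) : Prop :=
  ∃ (n : ℕ) (x y : Fin n → Fin 3 → ℂ),
    A = ∑ ι : Fin n, rankOne (prodVec (x ι) (y ι))

/-- The convex cone `V₁` of all separable matrices. -/
def V1 : Set M9 := {A | IsSep A}

/-- `A` is PPT: both `A` and `A^Γ` are positive semidefinite. -/
def IsPPT (A : M9) : Prop := A.PosSemidef ∧ (ptrans A).PosSemidef

/-- The convex cone `𝕋` of all PPT matrices. -/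
def Tcone : Set M9 := {A | IsPPT A}

/-- `F` is a face of the convex set `C`. -/
def IsFaceOf (F C : Set M9) : Prop :=
  F ⊆ C ∧ Convex ℝ F ∧
    ∀ x ∈ C, ∀ y ∈ C, ∀ t : ℝ, 0 < t → t < 1 →
      (1 - t) • x + t • y ∈ F → x ∈ F ∧ y ∈ F

/-- The smallest face of `C` containing `A`. -/
def smallestFace (C : Set M9) (A : M9) : Set M9 := ⋂₀ {F | IsFaceOf F C ∧ A ∈ F}

/-- `P[A]`: product vectors `z` with `z z* ∈ V₁[A]`. -/
def Pvecs (A : M9) : Set V9 :=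
  {z | (∃ x y : Fin 3 → ℂ, z = prodVec x y) ∧ rankOne z ∈ smallestFace V1 A}

/-- `Q[A]`: product vectors `x⊗y` with `x⊗y ∈ range A` and `x̄⊗y ∈ range A^Γ`. -/
def Qvecs (A : M9) : Set V9 :=
  {z | ∃ x y : Fin 3 → ℂ, z = prodVec x y ∧
    prodVec x y ∈ MatRange A ∧ prodVec (conjVec x) y ∈ MatRange (ptrans A)}

/-- The face `𝕋[A]` of the PPT cone determined by `A`. -/
def TFace (A : M9) : Set M9 :=
  {B | IsPPT B ∧ MatRange B ≤ MatRange A ∧ MatRange (ptrans B) ≤ MatRange (ptrans A)}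

/-- `x` is an interior point of the convex set `C`. -/
def IsInteriorPt (x : M9) (C : Set M9) : Prop :=
  x ∈ C ∧ ∀ y ∈ C, ∃ t : ℝ, 1 < t ∧ (1 - t) • y + t • x ∈ C

/-- The matrix `A[a,b,c]` of the paper. -/
def Amat (a b c : ℝ) : M9 := fun p q =>
  if p = q then
    (if p.1 = p.2 then (a : ℂ) else if p.2 = p.1 + 1 then (c : ℂ) else (b : ℂ))
  else if p.1 = p.2 ∧ q.1 = q.2 then 1 else 0

/-!
`V₁ ∩ 𝕋[A]` is a face of `V₁` (the trace on `V₁ ⊆ 𝕋` of the face `𝕋[A]` of the PPT cone)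
containing `A`, so it always contains `V₁[A]`. For a product vector `z = x ⊗ y`, the condition
`zz* ∈ V₁ ∩ 𝕋[A]` says exactly `z ∈ range A` and `x̄ ⊗ y ∈ range A^Γ`: `Q[A]` is to `V₁ ∩ 𝕋[A]`
what `P[A]` is to `V₁[A]`, which gives one direction. Conversely, an element of `V₁ ∩ 𝕋[A]` is a
sum of rank-one `zz*` with `z` a product vector, each of which lies in the face `V₁ ∩ 𝕋[A]`, hence
in `V₁[A]` once `P[A] = Q[A]`; and a face of a cone is closed under sums.
-/

theorem LinearMap.IsSymmetric.range_le_range_of_ker_le {𝕜 E : Type*} [RCLike 𝕜]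
    [NormedAddCommGroup E] [InnerProductSpace 𝕜 E] [FiniteDimensional 𝕜 E]
    {S T : E →ₗ[𝕜] E} (hS : S.IsSymmetric) (hT : T.IsSymmetric)
    (h : LinearMap.ker S ≤ LinearMap.ker T) : LinearMap.range T ≤ LinearMap.range S := by
  simpa [LinearMap.orthogonal_ker, hS.adjoint_eq, hT.adjoint_eq] using Submodule.orthogonal_le h

namespace Matrix

variable {𝕜 n : Type*} [RCLike 𝕜] [Fintype n] [DecidableEq n]

theorem IsHermitian.range_mulVecLin_le_of_ker_le {S T : Matrix n n 𝕜}
    (hS : S.IsHermitian) (hT : T.IsHermitian)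
    (h : LinearMap.ker S.mulVecLin ≤ LinearMap.ker T.mulVecLin) :
    LinearMap.range T.mulVecLin ≤ LinearMap.range S.mulVecLin := by
  have hE := (isSymmetric_toEuclideanLin_iff.mpr hS).range_le_range_of_ker_le
    (isSymmetric_toEuclideanLin_iff.mpr hT) fun v hv =>
      congrArg (WithLp.toLp 2) (h (congrArg WithLp.ofLp hv :))
  rintro _ ⟨v, rfl⟩
  obtain ⟨w, hw⟩ := hE ⟨WithLp.toLp 2 v, rfl⟩
  exact ⟨WithLp.ofLp w, congrArg WithLp.ofLp hw⟩

theorem PosSemidef.range_mulVecLin_le_add {B C : Matrix n n 𝕜} (hB : B.PosSemidef)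
    (hC : C.PosSemidef) : LinearMap.range B.mulVecLin ≤ LinearMap.range (B + C).mulVecLin := by
  refine (hB.add hC).isHermitian.range_mulVecLin_le_of_ker_le hB.isHermitian fun v hv => ?_
  have hsum : star v ⬝ᵥ B *ᵥ v + star v ⬝ᵥ C *ᵥ v = 0 := by
    rw [← dotProduct_add, ← add_mulVec]
    exact (hB.add hC).dotProduct_mulVec_zero_iff v |>.mpr hv
  exact (hB.dotProduct_mulVec_zero_iff v).mp <|
    ((add_eq_zero_iff_of_nonneg (hB.dotProduct_mulVec_nonneg v)
      (hC.dotProduct_mulVec_nonneg v)).mp hsum).1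

end Matrix

section Faces

variable {F C : Set M9} {A : M9}

theorem mem_smallestFace_self (C : Set M9) (A : M9) : A ∈ smallestFace C A :=
  Set.mem_sInter.mpr fun _ hF => hF.2

theorem smallestFace_subset (hF : IsFaceOf F C) (hA : A ∈ F) : smallestFace C A ⊆ F :=
  Set.sInter_subset_of_mem ⟨hF, hA⟩

theorem isFaceOf_self (hC : Convex ℝ C) : IsFaceOf C C :=
  ⟨subset_rfl, hC, fun _ hx _ hy _ _ _ _ => ⟨hx, hy⟩⟩

theorem isFaceOf_smallestFace (hC : Convex ℝ C) (hA : A ∈ C) :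
    IsFaceOf (smallestFace C A) C := by
  refine ⟨fun B hB => Set.mem_sInter.mp hB C ⟨isFaceOf_self hC, hA⟩,
    convex_sInter fun G hG => hG.1.2.1, fun x hx y hy t ht0 ht1 hmem => ?_⟩
  have h := fun G (hG : G ∈ {G | IsFaceOf G C ∧ A ∈ G}) =>
    hG.1.2.2 x hx y hy t ht0 ht1 (Set.mem_sInter.mp hmem G hG)
  exact ⟨Set.mem_sInter.mpr fun G hG => (h G hG).1, Set.mem_sInter.mpr fun G hG => (h G hG).2⟩

theorem IsFaceOf.inter_of_subset {D : Set M9} (hF : IsFaceOf F C) (hD : Convex ℝ D)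
    (hDC : D ⊆ C) : IsFaceOf (D ∩ F) D := by
  refine ⟨Set.inter_subset_left, hD.inter hF.2.1, fun x hx y hy t ht0 ht1 hmem => ?_⟩
  obtain ⟨hxF, hyF⟩ := hF.2.2 x (hDC hx) y (hDC hy) t ht0 ht1 hmem.2
  exact ⟨⟨hx, hxF⟩, ⟨hy, hyF⟩⟩

end Faces

section RankOne

theorem rankOne_mulVec (z v : V9) : rankOne z *ᵥ v = (star z ⬝ᵥ v) • z := by
  ext p
  simp only [rankOne, mulVec, vecMulVec, dotProduct, of_apply, Pi.smul_apply, smul_eq_mul,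
    Finset.sum_mul, Pi.star_apply, starRingEnd_apply]
  exact Finset.sum_congr rfl fun q _ => by ring

theorem posSemidef_rankOne (z : V9) : (rankOne z).PosSemidef :=
  posSemidef_vecMulVec_self_star z

theorem matRange_rankOne_le_iff {z : V9} {W : Submodule ℂ V9} :
    MatRange (rankOne z) ≤ W ↔ z ∈ W := by
  refine ⟨fun h => ?_, fun hz => ?_⟩
  · by_cases hz : z = 0
    · exact hz ▸ W.zero_mem
    have hzz : star z ⬝ᵥ z ≠ 0 := fun h => hz (dotProduct_star_self_eq_zero.mp h)
    refine h ⟨(star z ⬝ᵥ z)⁻¹ • z, ?_⟩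
    rw [mulVecLin_apply, mulVec_smul, rankOne_mulVec, smul_smul, inv_mul_cancel₀ hzz, one_smul]
  · rintro _ ⟨v, rfl⟩
    rw [mulVecLin_apply, rankOne_mulVec]
    exact W.smul_mem _ hz

theorem rankOne_smul (c : ℂ) (z : V9) : rankOne (c • z) = (c * star c) • rankOne z := by
  ext p q
  simp only [rankOne, vecMulVec_apply, Pi.smul_apply, smul_eq_mul, Matrix.smul_apply,
    starRingEnd_apply, star_mul']
  ring

theorem prodVec_smul (c : ℂ) (x y : Fin 3 → ℂ) : prodVec (c • x) y = c • prodVec x y := by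
  ext p
  simp [prodVec, mul_assoc]

end RankOne

section PartialTranspose

theorem ptrans_sum {ι : Type*} (s : Finset ι) (M : ι → M9) :
    ptrans (∑ i ∈ s, M i) = ∑ i ∈ s, ptrans (M i) := by
  ext p q
  simp [ptrans, Matrix.sum_apply]

theorem ptrans_rankOne_prodVec (x y : Fin 3 → ℂ) :
    ptrans (rankOne (prodVec x y)) = rankOne (prodVec (conjVec x) y) := by
  ext p q
  simp only [ptrans, rankOne, vecMulVec_apply, prodVec, conjVec, map_mul, Complex.conj_conj]
  ring

end PartialTranspose

section SeparableCone

theorem zero_mem_V1 : (0 : M9) ∈ V1 :=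
  ⟨0, fun _ => 0, fun _ => 0, by simp⟩

theorem rankOne_prodVec_mem_V1 (x y : Fin 3 → ℂ) : rankOne (prodVec x y) ∈ V1 :=
  ⟨1, fun _ => x, fun _ => y, by simp⟩

theorem add_mem_V1 {B C : M9} (hB : B ∈ V1) (hC : C ∈ V1) : B + C ∈ V1 := by
  obtain ⟨n, x, y, rfl⟩ := hB
  obtain ⟨m, x', y', rfl⟩ := hC
  refine ⟨n + m, Fin.append x x', Fin.append y y', ?_⟩
  simp [Fin.sum_univ_add]

theorem smul_mem_V1 {c : ℝ} (hc : 0 ≤ c) {B : M9} (hB : B ∈ V1) : c • B ∈ V1 := by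
  obtain ⟨n, x, y, rfl⟩ := hB
  refine ⟨n, fun i => (Real.sqrt c : ℂ) • x i, y, ?_⟩
  have hsq : (Real.sqrt c : ℂ) * star (Real.sqrt c : ℂ) = c := by
    rw [Complex.star_def, Complex.conj_ofReal, ← Complex.ofReal_mul, Real.mul_self_sqrt hc]
  rw [Finset.smul_sum]
  refine Finset.sum_congr rfl fun i _ => ?_
  rw [prodVec_smul, rankOne_smul, hsq, Complex.coe_smul]

theorem sum_mem_V1 {ι : Type*} (s : Finset ι) {M : ι → M9} (hM : ∀ i ∈ s, M i ∈ V1) :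
    ∑ i ∈ s, M i ∈ V1 :=
  Finset.sum_induction M (· ∈ V1) (fun _ _ => add_mem_V1) zero_mem_V1 hM

theorem convex_V1 : Convex ℝ V1 := fun _ hB _ hC _ _ ha hb _ =>
  add_mem_V1 (smul_mem_V1 ha hB) (smul_mem_V1 hb hC)

end SeparableCone

section FacesOfSeparableCone

variable {F : Set M9} {B C : M9}

theorem IsFaceOf.zero_mem (hF : IsFaceOf F V1) (hB : B ∈ F) : (0 : M9) ∈ F := by
  refine (hF.2.2 0 zero_mem_V1 ((2 : ℝ) • B) (smul_mem_V1 zero_le_two (hF.1 hB)) (1 / 2)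
    (by norm_num) (by norm_num) ?_).1
  convert hB using 1
  module

theorem IsFaceOf.two_smul_mem (hF : IsFaceOf F V1) (hB : B ∈ F) : (2 : ℝ) • B ∈ F := by
  refine (hF.2.2 0 zero_mem_V1 ((2 : ℝ) • B) (smul_mem_V1 zero_le_two (hF.1 hB)) (1 / 2)
    (by norm_num) (by norm_num) ?_).2
  convert hB using 1
  module

theorem IsFaceOf.add_mem (hF : IsFaceOf F V1) (hB : B ∈ F) (hC : C ∈ F) : B + C ∈ F := by
  convert hF.two_smul_mem (hF.2.1 hB hC (by norm_num : (0 : ℝ) ≤ 1 / 2)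
    (by norm_num : (0 : ℝ) ≤ 1 / 2) (by norm_num)) using 1
  module

theorem IsFaceOf.mem_of_add_mem (hF : IsFaceOf F V1) (hB : B ∈ V1) (hC : C ∈ V1)
    (h : B + C ∈ F) : B ∈ F := by
  have hhalf : (1 / 2 : ℝ) • (B + C) ∈ F :=
    hF.2.1.smul_mem_of_zero_mem (hF.zero_mem h) h ⟨by norm_num, by norm_num⟩
  refine (hF.2.2 B hB C hC (1 / 2) (by norm_num) (by norm_num) ?_).1
  convert hhalf using 1
  module

theorem IsFaceOf.sum_mem (hF : IsFaceOf F V1) (hne : F.Nonempty) {ι : Type*} {s : Finset ι}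
    {M : ι → M9} (hM : ∀ i ∈ s, M i ∈ F) : ∑ i ∈ s, M i ∈ F :=
  Finset.sum_induction M (· ∈ F) (fun _ _ => hF.add_mem) (hF.zero_mem hne.some_mem) hM

theorem IsFaceOf.mem_of_sum_mem (hF : IsFaceOf F V1) {ι : Type*} [DecidableEq ι]
    {s : Finset ι} {M : ι → M9} (hM : ∀ i ∈ s, M i ∈ V1) (h : ∑ i ∈ s, M i ∈ F) {i : ι}
    (hi : i ∈ s) : M i ∈ F :=
  hF.mem_of_add_mem (hM i hi) (sum_mem_V1 _ fun j hj => hM j (Finset.mem_of_mem_erase hj))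
    (by rwa [Finset.add_sum_erase s M hi])

end FacesOfSeparableCone

section PPT

variable {A B C : M9}

theorem IsPPT.add (hB : IsPPT B) (hC : IsPPT C) : IsPPT (B + C) :=
  ⟨hB.1.add hC.1, hB.2.add hC.2⟩

theorem IsPPT.smul (hB : IsPPT B) {c : ℝ} (hc : 0 ≤ c) : IsPPT (c • B) :=
  ⟨hB.1.smul hc, hB.2.smul hc⟩

theorem V1_subset_Tcone : V1 ⊆ Tcone := by
  rintro _ ⟨n, x, y, rfl⟩
  refine ⟨posSemidef_sum _ fun i _ => posSemidef_rankOne _, ?_⟩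
  rw [ptrans_sum]
  exact posSemidef_sum _ fun i _ => ptrans_rankOne_prodVec (x i) (y i) ▸ posSemidef_rankOne _

theorem matRange_add_le (B C : M9) : MatRange (B + C) ≤ MatRange B ⊔ MatRange C := by
  rintro _ ⟨v, rfl⟩
  rw [mulVecLin_apply, add_mulVec]
  exact Submodule.add_mem_sup ⟨v, rfl⟩ ⟨v, rfl⟩

theorem matRange_smul_le (c : ℝ) (B : M9) : MatRange (c • B) ≤ MatRange B := by
  rintro _ ⟨v, rfl⟩
  exact ⟨c • v, by simp⟩

theorem add_mem_TFace (hB : B ∈ TFace A) (hC : C ∈ TFace A) : B + C ∈ TFace A :=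
  ⟨hB.1.add hC.1, (matRange_add_le B C).trans (sup_le hB.2.1 hC.2.1),
    (matRange_add_le _ _).trans (sup_le hB.2.2 hC.2.2)⟩

theorem smul_mem_TFace {c : ℝ} (hc : 0 ≤ c) (hB : B ∈ TFace A) : c • B ∈ TFace A :=
  ⟨hB.1.smul hc, (matRange_smul_le c B).trans hB.2.1, (matRange_smul_le c _).trans hB.2.2⟩

theorem mem_TFace_of_smul_mem {c : ℝ} (hc : 0 < c) (hB : c • B ∈ TFace A) : B ∈ TFace A := by
  simpa [inv_smul_smul₀ hc.ne'] using smul_mem_TFace (inv_nonneg.mpr hc.le) hB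

theorem mem_TFace_of_add_mem (hB : IsPPT B) (hC : IsPPT C) (h : B + C ∈ TFace A) :
    B ∈ TFace A :=
  ⟨hB, (hB.1.range_mulVecLin_le_add hC.1).trans h.2.1,
    (hB.2.range_mulVecLin_le_add hC.2).trans h.2.2⟩

theorem isFaceOf_TFace (A : M9) : IsFaceOf (TFace A) Tcone := by
  refine ⟨fun _ hB => hB.1, fun _ hB _ hC _ _ ha hb _ =>
    add_mem_TFace (smul_mem_TFace ha hB) (smul_mem_TFace hb hC),
    fun x hx y hy t ht0 ht1 h => ?_⟩
  have ht1' : 0 < 1 - t := sub_pos.mpr ht1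
  exact ⟨mem_TFace_of_smul_mem ht1' <|
      mem_TFace_of_add_mem (IsPPT.smul hx ht1'.le) (IsPPT.smul hy ht0.le) h,
    mem_TFace_of_smul_mem ht0 <|
      mem_TFace_of_add_mem (IsPPT.smul hy ht0.le) (IsPPT.smul hx ht1'.le) (by rwa [add_comm] at h)⟩

theorem isFaceOf_V1_inter_TFace (A : M9) : IsFaceOf (V1 ∩ TFace A) V1 :=
  (isFaceOf_TFace A).inter_of_subset convex_V1 V1_subset_Tcone

theorem rankOne_prodVec_mem_V1_inter_TFace_iff {x y : Fin 3 → ℂ} :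
    rankOne (prodVec x y) ∈ V1 ∩ TFace A ↔
      prodVec x y ∈ MatRange A ∧ prodVec (conjVec x) y ∈ MatRange (ptrans A) := by
  have hV1 := rankOne_prodVec_mem_V1 x y
  have hPPT : IsPPT (rankOne (prodVec x y)) := V1_subset_Tcone hV1
  simp only [Set.mem_inter_iff, hV1, hPPT, true_and, TFace, Set.mem_ofPred_eq,
    ptrans_rankOne_prodVec, matRange_rankOne_le_iff]

theorem Qvecs_eq (A : M9) :
    Qvecs A = {z | (∃ x y : Fin 3 → ℂ, z = prodVec x y) ∧ rankOne z ∈ V1 ∩ TFace A} := by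
  ext z
  constructor
  · rintro ⟨x, y, rfl, h⟩
    exact ⟨⟨x, y, rfl⟩, rankOne_prodVec_mem_V1_inter_TFace_iff.mpr h⟩
  · rintro ⟨⟨x, y, rfl⟩, h⟩
    exact ⟨x, y, rfl, rankOne_prodVec_mem_V1_inter_TFace_iff.mp h⟩

end PPT

/-- For separable `A`, `V₁[A] = V₁ ∩ 𝕋[A]` iff `P[A] = Q[A]`. -/
theorem stmt3 (A : M9) (hA : IsSep A) :
    smallestFace V1 A = V1 ∩ TFace A ↔ Pvecs A = Qvecs A := by
  rw [Qvecs_eq]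
  refine ⟨fun h => by rw [Pvecs, h], fun hPQ => ?_⟩
  have hAT : A ∈ V1 ∩ TFace A := ⟨hA, V1_subset_Tcone hA, le_rfl, le_rfl⟩
  refine (smallestFace_subset (isFaceOf_V1_inter_TFace A) hAT).antisymm ?_
  rintro B hB
  obtain ⟨n, x, y, rfl⟩ := hB.1
  refine (isFaceOf_smallestFace convex_V1 hA).sum_mem ⟨A, mem_smallestFace_self V1 A⟩
    fun i _ => ?_
  have hi : rankOne (prodVec (x i) (y i)) ∈ V1 ∩ TFace A :=
    (isFaceOf_V1_inter_TFace A).mem_of_sum_mem (fun j _ => rankOne_prodVec_mem_V1 _ _) hB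
      (Finset.mem_univ i)
  exact ((Set.ext_iff.mp hPQ _).mpr ⟨⟨x i, y i, rfl⟩, hi⟩).2
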